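/- Let (x_m)_{m∈ℤ} be a real sequence, w_p = x_p − x_{p−1}, c ∈ ℝ, and for a < b let H(a,b) = #{m ∈ ℤ : a < m ≤ b, w_m > c}. Fix n ≥ L ≥ |ℓ| and suppose H(−n−1, n) > 0. Then the PRSA average z_{n}(ℓ) = (Σ_{m=−n}^{n} x_{m+ℓ} 1_{w_m>c})/H(−n−1,n) satisfies z_n(ℓ) = x₀ + Σ_{p=1}^{n+ℓ} w_p · H(p−ℓ−1, n)/H(−n−1, n) − Σ_{p=−n+ℓ+1}^{0} w_p · H(−n−1, p−ℓ−1)/H(−n−1, n). -/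

import Mathlib

/-- Number of hinge points (indices `m` with `w_m > c`) in the integer
interval `(a, b]`, for the sequence `x` and threshold `c`. -/
noncomputable def hingeCount (x : ℤ → ℝ) (c : ℝ) (a b : ℤ) : ℕ :=
  ((Finset.Icc (a + 1) b).filter (fun m => c < x m - x (m - 1))).card

/-!
Each `x (m + ℓ)` is `x 0` plus the increments `w p` with `0 < p ≤ m + ℓ`, minus those with
`m + ℓ < p ≤ 0`. Summing this over the hinge points `m ∈ [-n, n]` and exchanging the two sums,
each increment `w p` gets weighted by the number of hinge points `m` with `p ≤ m + ℓ`
(resp. `m + ℓ < p`), i.e. by `H(p - ℓ - 1, n)` (resp. `H(-n - 1, p - ℓ - 1)`).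
-/

open Finset

section Telescoping

variable {G : Type*} [AddCommGroup G] (x : ℤ → G)

theorem sum_Icc_sub_eq_sub {a b : ℤ} (h : a ≤ b) :
    ∑ p ∈ Icc (a + 1) b, (x p - x (p - 1)) = x b - x a := by
  induction b, h using Int.leInduction with
  | base => simp
  | succ b hab ih =>
    rw [Icc_add_one_left_eq_Ioc, ← insert_Ioc_right_eq_Ioc_add_one hab,
      sum_insert (by simp), ← Icc_add_one_left_eq_Ioc, ih, add_sub_cancel_right]
    abel

theorem eq_add_sum_ite_sub_sum_ite {a b k : ℤ} (hak : a ≤ k) (hkb : k ≤ b) :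
    x k = x 0 + ∑ p ∈ Icc 1 b, (if p ≤ k then x p - x (p - 1) else 0)
      - ∑ p ∈ Icc (a + 1) 0, (if k < p then x p - x (p - 1) else 0) := by
  rw [← sum_filter, ← sum_filter]
  rcases le_or_gt 0 k with hk | hk
  · have hpos : (Icc 1 b).filter (· ≤ k) = Icc (0 + 1) k := by
      ext; simp only [mem_filter, mem_Icc]; omega
    have hneg : (Icc (a + 1) 0).filter (k < ·) = ∅ := by
      ext; simp only [mem_filter, mem_Icc, notMem_empty, iff_false]; omega
    rw [hpos, hneg, sum_Icc_sub_eq_sub x hk, sum_empty]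
    abel
  · have hpos : (Icc 1 b).filter (· ≤ k) = ∅ := by
      ext; simp only [mem_filter, mem_Icc, notMem_empty, iff_false]; omega
    have hneg : (Icc (a + 1) 0).filter (k < ·) = Icc (k + 1) 0 := by
      ext; simp only [mem_filter, mem_Icc]; omega
    rw [hpos, hneg, sum_Icc_sub_eq_sub x hk.le, sum_empty]
    abel

end Telescoping

theorem sum_sum_ite_eq_sum_mul_card {α β R : Type*} [Semiring R] (s : Finset α) (t : Finset β)
    (r : α → β → Prop) [∀ a b, Decidable (r a b)] (g : β → R) :
    ∑ a ∈ s, ∑ b ∈ t, (if r a b then g b else 0) = ∑ b ∈ t, g b * #(s.filter (r · b)) := by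
  rw [sum_comm]
  refine sum_congr rfl fun b _ => ?_
  rw [← sum_filter, sum_const, nsmul_eq_mul, Nat.cast_comm]

noncomputable def hingeSet (x : ℤ → ℝ) (c : ℝ) (a b : ℤ) : Finset ℤ :=
  (Icc (a + 1) b).filter (fun m => c < x m - x (m - 1))

section HingeSet

variable (x : ℤ → ℝ) (c : ℝ) {a b : ℤ}

theorem card_hingeSet : #(hingeSet x c a b) = hingeCount x c a b := rfl

theorem hingeSet_filter_lt {t : ℤ} (h : a ≤ t) :
    (hingeSet x c a b).filter (t < ·) = hingeSet x c t b := by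
  ext; simp only [hingeSet, mem_filter, mem_Icc]; grind

theorem hingeSet_filter_le {t : ℤ} (h : t ≤ b) :
    (hingeSet x c a b).filter (· ≤ t) = hingeSet x c a t := by
  ext; simp only [hingeSet, mem_filter, mem_Icc]; grind

end HingeSet

theorem sum_hinge_shift_eq (x : ℤ → ℝ) (c : ℝ) {n ℓ : ℤ} (hℓ₁ : -n ≤ ℓ) (hℓ₂ : ℓ ≤ n) :
    ∑ m ∈ Icc (-n) n, (if c < x m - x (m - 1) then x (m + ℓ) else 0)
      = hingeCount x c (-n - 1) n * x 0
        + ∑ p ∈ Icc 1 (n + ℓ), (x p - x (p - 1)) * hingeCount x c (p - ℓ - 1) n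
        - ∑ p ∈ Icc (-n + ℓ + 1) 0, (x p - x (p - 1)) * hingeCount x c (-n - 1) (p - ℓ - 1) := by
  set S := hingeSet x c (-n - 1) n
  have hS : ∑ m ∈ Icc (-n) n, (if c < x m - x (m - 1) then x (m + ℓ) else 0)
      = ∑ m ∈ S, x (m + ℓ) := by
    simp only [S, hingeSet, sub_add_cancel, sum_filter]
  have hdecomp : ∀ m ∈ S, x (m + ℓ) = x 0
      + ∑ p ∈ Icc 1 (n + ℓ), (if p ≤ m + ℓ then x p - x (p - 1) else 0)
      - ∑ p ∈ Icc (-n + ℓ + 1) 0, (if m + ℓ < p then x p - x (p - 1) else 0) := by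
    intro m hm
    have hm' := mem_Icc.mp (mem_filter.mp hm).1
    exact eq_add_sum_ite_sub_sum_ite x (by omega) (by omega)
  rw [hS, sum_congr rfl hdecomp, sum_sub_distrib, sum_add_distrib, sum_const, card_hingeSet,
    nsmul_eq_mul, sum_sum_ite_eq_sum_mul_card, sum_sum_ite_eq_sum_mul_card]
  congr 1
  · congr 1
    refine sum_congr rfl fun p hp => ?_
    have hp' := mem_Icc.mp hp
    rw [filter_congr (q := (p - ℓ - 1 < ·)) (fun m _ => by omega),
      hingeSet_filter_lt x c (by omega), card_hingeSet]
  · refine sum_congr rfl fun p hp => ?_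
    have hp' := mem_Icc.mp hp
    rw [filter_congr (q := (· ≤ p - ℓ - 1)) (fun m _ => by omega),
      hingeSet_filter_le x c (by omega), card_hingeSet]

/-- Lemma 4.1: decomposition of the PRSA average in terms of increments and
hinge-point counts. -/
theorem prsa_average_decomposition
    (x : ℤ → ℝ) (c : ℝ) (n L ℓ : ℤ) (hℓ : |ℓ| ≤ L) (hL : L ≤ n)
    (hH : 0 < hingeCount x c (-n - 1) n) :
    (∑ m ∈ Finset.Icc (-n) n, if c < x m - x (m - 1) then x (m + ℓ) else 0)
        / (hingeCount x c (-n - 1) n : ℝ)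
      = x 0
        + (∑ p ∈ Finset.Icc 1 (n + ℓ), (x p - x (p - 1))
            * ((hingeCount x c (p - ℓ - 1) n : ℝ) / (hingeCount x c (-n - 1) n : ℝ)))
        - (∑ p ∈ Finset.Icc (-n + ℓ + 1) 0, (x p - x (p - 1))
            * ((hingeCount x c (-n - 1) (p - ℓ - 1) : ℝ)
                / (hingeCount x c (-n - 1) n : ℝ))) := by
  obtain ⟨hℓ₁, hℓ₂⟩ := abs_le.mp hℓ
  have hH₀ : (hingeCount x c (-n - 1) n : ℝ) ≠ 0 := Nat.cast_ne_zero.mpr hH.ne'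
  rw [sum_hinge_shift_eq x c (by omega) (by omega), div_eq_iff hH₀]
  simp only [sub_mul, add_mul, sum_mul, mul_assoc, div_mul_cancel₀ _ hH₀]
  ring
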